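/- arXiv:1412.2087 — 4 statements merged into one kernel-verified Lean document; each statement's English description precedes it below -/
import Mathlib

section
/- Let K be a kernel on ℝ² and let Φ be a point process on ℝ² that satisfies the DPP Laplace identity with kernel K on compactly supported functions and whose intensity measure is K(x,x)dx. Then for every measurable v : ℝ² → [0,1] such that −log v satisfies conditions (a)–(c) with respect to K, the probability generating functional satisfies E[Π_{x∈Φ} v(x)] = Σ_{n=0}^∞ ((−1)^n/n!) ∫_{(ℝ²)^n} det(K(x_i,x_j))_{1≤i,j≤n} Π_{i=1}^n (1−v(x_i)) dx_1⋯dx_n, where the product Π_{x∈Φ} v(x) runs over the atoms of Φ counted with multiplicity (equivalently it equals exp(∫ log v dΦ)). -/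
/-!
Truncate `-log v` to the balls `B(0, k)`, where the Laplace identity applies. As `k → ∞` the
left side converges by monotone convergence inside `Φ ω` and bounded convergence in `ω`. On the
right, Hadamard's inequality `|det (K(xᵢ, xⱼ))| ≤ ∏ K(xᵢ, xᵢ)` dominates the `n`-th term,
uniformly in `k`, by `Cⁿ / n!` with `C = ∫ K(x, x) (1 - v x) dx < ∞` (condition (c)); so
dominated convergence applies to each term (an integral over `(ℝ²)ⁿ`) and then to the series.
-/

open MeasureTheory Measure Metric Filter
open scoped ENNReal NNReal Real Topology BigOperators ComplexOrder

noncomputable section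

abbrev E2 : Type := EuclideanSpace ℝ (Fin 2)

/-- `expNeg a = e^{-a}` for `a ∈ [0,∞]`, with `expNeg ∞ = 0`. -/
def expNeg (a : ℝ≥0∞) : ℝ := if a = ∞ then 0 else Real.exp (-a.toReal)

/-- `negLog t = -log t ∈ [0,∞]` for `t ∈ [0,1]`, with `negLog 0 = ∞`. -/
def negLog (t : ℝ) : ℝ≥0∞ := if t = 0 then ∞ else ENNReal.ofReal (-Real.log t)

structure IsKernel (K : E2 → E2 → ℂ) : Prop where
  continuous : Continuous fun p : E2 × E2 => K p.1 p.2
  hermitian : ∀ x y : E2, K y x = starRingEnd ℂ (K x y)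
  locSqInt : ∀ s : Set (E2 × E2), IsCompact s →
    IntegrableOn (fun p : E2 × E2 => ‖K p.1 p.2‖ ^ 2) s
  posSemidef : ∀ (n : ℕ) (x : Fin n → E2),
    (Matrix.of fun i j : Fin n => K (x i) (x j)).PosSemidef

structure SatConds (K : E2 → E2 → ℂ) (f : E2 → ℝ≥0∞) : Prop where
  tendsto_zero : Tendsto f (Bornology.cobounded E2) (nhds 0)
  tail_tendsto_zero : Tendsto
    (fun r : ℝ => ∫⁻ x in (closedBall (0 : E2) r)ᶜ, ENNReal.ofReal (K x x).re * f x)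
    atTop (nhds 0)
  finite_integral : ∫⁻ x : E2, ENNReal.ofReal ((K x x).re * (1 - expNeg (f x))) < ∞

def dppTerm (K : E2 → E2 → ℂ) (g : E2 → ℝ) (n : ℕ) : ℂ :=
  ((-1 : ℂ) ^ n / n.factorial) *
    ∫ x : Fin n → E2,
      (Matrix.of fun i j : Fin n => K (x i) (x j)).det * ∏ i : Fin n, (g (x i) : ℂ)

def DPPLaplaceOnCompact {Ω : Type} [MeasurableSpace Ω] (μ : Measure Ω)
    (Φ : Ω → Measure E2) (K : E2 → E2 → ℂ) : Prop :=
  ∀ f : E2 → ℝ≥0∞, Measurable f → (∃ s : Set E2, IsCompact s ∧ ∀ x ∉ s, f x = 0) →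
    ((∫ ω, expNeg (∫⁻ x, f x ∂(Φ ω)) ∂μ : ℝ) : ℂ) =
      ∑' n : ℕ, dppTerm K (fun x => 1 - expNeg (f x)) n

lemma expNeg_eq_toReal_exp_neg (a : ℝ≥0∞) : expNeg a = (EReal.exp (-(a : EReal))).toReal := by
  induction a using ENNReal.recTopCoe with
  | top => simp [expNeg]
  | coe r =>
    rw [expNeg, if_neg ENNReal.coe_ne_top, EReal.coe_nnreal_eq_coe_real, ← EReal.coe_neg,
      EReal.exp_coe, ENNReal.toReal_ofReal (Real.exp_pos _).le, ENNReal.coe_toReal]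

lemma exp_neg_coe_ennreal_le_one (a : ℝ≥0∞) : EReal.exp (-(a : EReal)) ≤ 1 :=
  EReal.exp_le_one_iff.mpr (EReal.neg_le_zero.mpr (EReal.coe_ennreal_nonneg a))

lemma continuous_expNeg : Continuous expNeg := by
  rw [funext expNeg_eq_toReal_exp_neg, continuous_iff_continuousAt]
  intro a
  refine (ENNReal.continuousAt_toReal ?_).comp ?_
  · exact ((exp_neg_coe_ennreal_le_one a).trans_lt ENNReal.one_lt_top).ne
  · exact (ENNReal.continuous_exp.comp
      (continuous_neg.comp continuous_coe_ennreal_ereal)).continuousAt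

lemma norm_expNeg_le_one (a : ℝ≥0∞) : ‖expNeg a‖ ≤ 1 := by
  rw [expNeg_eq_toReal_exp_neg, Real.norm_of_nonneg ENNReal.toReal_nonneg]
  exact ENNReal.toReal_le_of_le_ofReal zero_le_one (by simpa using exp_neg_coe_ennreal_le_one a)

lemma expNeg_zero : expNeg 0 = 1 := by simp [expNeg]

lemma expNeg_negLog {t : ℝ} (h0 : 0 ≤ t) (h1 : t ≤ 1) : expNeg (negLog t) = t := by
  rcases h0.eq_or_lt with rfl | ht
  · simp [negLog, expNeg]
  · rw [negLog, if_neg ht.ne', expNeg, if_neg ENNReal.ofReal_ne_top,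
      ENNReal.toReal_ofReal (neg_nonneg.mpr (Real.log_nonpos h0 h1)), neg_neg, Real.exp_log ht]

lemma measurable_negLog : Measurable negLog :=
  Measurable.ite (measurableSet_singleton 0) measurable_const
    (ENNReal.measurable_ofReal.comp Real.measurable_log.neg)

lemma Real.prod_le_one_of_sum_eq_card {ι : Type*} [Fintype ι] {z : ι → ℝ} (hz : ∀ i, 0 ≤ z i)
    (hsum : ∑ i, z i = Fintype.card ι) : ∏ i, z i ≤ 1 := by
  rcases isEmpty_or_nonempty ι with hι | hι
  · simp
  have hcard : (0 : ℝ) < Fintype.card ι := Nat.cast_pos.mpr Fintype.card_pos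
  have hamgm := Real.geom_mean_le_arith_mean Finset.univ (fun _ => 1) z (fun _ _ => zero_le_one)
    (by simpa using hcard) (fun i _ => hz i)
  simp only [Real.rpow_one, Finset.sum_const, Finset.card_univ, nsmul_eq_mul, mul_one, one_mul,
    hsum, div_self hcard.ne'] at hamgm
  by_contra! h
  exact hamgm.not_gt (Real.one_lt_rpow h (inv_pos.mpr hcard))

namespace Matrix.PosSemidef

variable {n 𝕜 : Type*} [RCLike 𝕜] {M : Matrix n n 𝕜}

lemma re_diag_nonneg (hM : M.PosSemidef) (i : n) : 0 ≤ RCLike.re (M i i) :=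
  (RCLike.nonneg_iff.mp hM.diag_nonneg).1

variable [Fintype n] [DecidableEq n]

lemma col_eq_zero_of_diag_eq_zero (hM : M.PosSemidef) {i : n} (hi : M i i = 0) (j : n) :
    M j i = 0 := by
  have h := (hM.dotProduct_mulVec_zero_iff (Pi.single i 1)).mp (by simp [hi])
  simpa using congr_fun h j

lemma norm_det_le_one_of_diag_eq_one (hM : M.PosSemidef) (hdiag : ∀ i, M i i = 1) :
    ‖M.det‖ ≤ 1 := by
  have hsum : ∑ i, hM.isHermitian.eigenvalues i = Fintype.card n := by
    have h := hM.isHermitian.trace_eq_sum_eigenvalues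
    simp only [trace, diag, hdiag, Finset.sum_const, Finset.card_univ, nsmul_eq_mul, mul_one] at h
    exact_mod_cast h.symm
  rw [hM.isHermitian.det_eq_prod_eigenvalues, ← RCLike.ofReal_prod, RCLike.norm_ofReal,
    abs_of_nonneg (Finset.prod_nonneg fun i _ => hM.eigenvalues_nonneg i)]
  exact Real.prod_le_one_of_sum_eq_card hM.eigenvalues_nonneg hsum

theorem norm_det_le_prod_re_diag (hM : M.PosSemidef) : ‖M.det‖ ≤ ∏ i, RCLike.re (M i i) := by
  by_cases hzero : ∃ i, M i i = 0
  · obtain ⟨i, hi⟩ := hzero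
    rw [det_eq_zero_of_column_eq_zero i (hM.col_eq_zero_of_diag_eq_zero hi), norm_zero]
    exact Finset.prod_nonneg fun i _ => hM.re_diag_nonneg i
  push Not at hzero
  have hpos : ∀ i, 0 < RCLike.re (M i i) := fun i =>
    (hM.re_diag_nonneg i).lt_of_ne fun h => hzero i <| by
      rw [← hM.isHermitian.coe_re_apply_self, ← h, RCLike.ofReal_zero]
  -- `D M D` with `D = diag ((M i i)^(-1/2))` has unit diagonal.
  set d : n → ℝ := fun i => (√(RCLike.re (M i i)))⁻¹
  have hd : ∀ i, d i * d i * RCLike.re (M i i) = 1 := fun i => by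
    simp only [d, ← mul_inv, Real.mul_self_sqrt (hpos i).le, inv_mul_cancel₀ (hpos i).ne']
  set D : Matrix n n 𝕜 := diagonal fun i => (d i : 𝕜)
  have hDD : Dᴴ = D := by simp [D, diagonal_conjTranspose]
  have hN := hM.mul_mul_conjTranspose_same D
  have hNdet := hN.norm_det_le_one_of_diag_eq_one fun i => by
    rw [hDD, mul_diagonal, diagonal_mul, ← hM.isHermitian.coe_re_apply_self]
    exact_mod_cast (by linear_combination hd i : d i * RCLike.re (M i i) * d i = 1)
  rw [hDD, det_mul, det_mul, det_diagonal, norm_mul, norm_mul, ← mul_comm, ← mul_assoc,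
    ← RCLike.ofReal_prod, RCLike.norm_ofReal, ← sq, sq_abs, ← Finset.prod_pow] at hNdet
  calc ‖M.det‖ = (∏ i, d i ^ 2) * ‖M.det‖ * ∏ i, RCLike.re (M i i) := by
        rw [mul_comm _ ‖M.det‖, mul_assoc, ← Finset.prod_mul_distrib,
          Finset.prod_eq_one fun i _ => by rw [sq, hd i], mul_one]
    _ ≤ 1 * ∏ i, RCLike.re (M i i) := by
        gcongr
        · exact Finset.prod_nonneg fun i _ => (hpos i).le
    _ = ∏ i, RCLike.re (M i i) := one_mul _

end Matrix.PosSemidef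

namespace IsKernel

variable {K : E2 → E2 → ℂ}

lemma re_diag_nonneg (hK : IsKernel K) (x : E2) : 0 ≤ (K x x).re :=
  (hK.posSemidef 1 fun _ => x).re_diag_nonneg 0

lemma continuous_re_diag (hK : IsKernel K) : Continuous fun x => (K x x).re :=
  Complex.continuous_re.comp (hK.continuous.comp (continuous_id.prodMk continuous_id))

lemma integrable_re_diag_mul (hK : IsKernel K) {g : E2 → ℝ} (hg : Measurable g)
    (hg0 : ∀ x, 0 ≤ g x) (hfin : ∫⁻ x, ENNReal.ofReal ((K x x).re * g x) < ∞) :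
    Integrable fun x => (K x x).re * g x :=
  ⟨(hK.continuous_re_diag.measurable.mul hg).aestronglyMeasurable,
    (hasFiniteIntegral_iff_ofReal
      (.of_forall fun x => mul_nonneg (hK.re_diag_nonneg x) (hg0 x))).mpr hfin⟩

lemma continuous_det (hK : IsKernel K) (n : ℕ) :
    Continuous fun x : Fin n → E2 => (Matrix.of fun i j : Fin n => K (x i) (x j)).det :=
  Continuous.matrix_det <| continuous_matrix fun i j =>
    hK.continuous.comp ((continuous_apply i).prodMk (continuous_apply j) :
      Continuous fun x : Fin n → E2 => (x i, x j))

lemma norm_det_mul_prod_le (hK : IsKernel K) {g g' : E2 → ℝ} (hg' : ∀ x, 0 ≤ g' x)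
    (hle : ∀ x, g' x ≤ g x) {n : ℕ} (x : Fin n → E2) :
    ‖(Matrix.of fun i j : Fin n => K (x i) (x j)).det * ∏ i, (g' (x i) : ℂ)‖
      ≤ ∏ i, (K (x i) (x i)).re * g (x i) := by
  rw [norm_mul, ← Complex.ofReal_prod, Complex.norm_real,
    Real.norm_of_nonneg (Finset.prod_nonneg fun i _ => hg' _), Finset.prod_mul_distrib]
  exact mul_le_mul ((hK.posSemidef n x).norm_det_le_prod_re_diag)
    (Finset.prod_le_prod (fun i _ => hg' _) fun i _ => hle _)
    (Finset.prod_nonneg fun i _ => hg' _)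
    (Finset.prod_nonneg fun i _ => hK.re_diag_nonneg _)

lemma integrable_prod_re_diag_mul {g : E2 → ℝ} (hint : Integrable fun x => (K x x).re * g x)
    (n : ℕ) : Integrable fun x : Fin n → E2 => ∏ i, (K (x i) (x i)).re * g (x i) :=
  Integrable.fintype_prod (f := fun _ y => (K y y).re * g y) fun _ => hint

lemma norm_dppTerm_le (hK : IsKernel K) {g g' : E2 → ℝ} (hg' : ∀ x, 0 ≤ g' x)
    (hle : ∀ x, g' x ≤ g x) (hint : Integrable fun x => (K x x).re * g x) (n : ℕ) :
    ‖dppTerm K g' n‖ ≤ (∫ x, (K x x).re * g x) ^ n / n.factorial := by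
  have hint_pow : ∫ x : Fin n → E2, ∏ i, (K (x i) (x i)).re * g (x i)
      = (∫ x, (K x x).re * g x) ^ n := by
    simpa using integral_fintype_prod_volume_eq_pow (ι := Fin n) fun y : E2 => (K y y).re * g y
  rw [dppTerm, norm_mul, norm_div, norm_pow, norm_neg, norm_one, one_pow, Complex.norm_natCast,
    one_div_mul_eq_div, ← hint_pow]
  gcongr
  exact norm_integral_le_of_norm_le (integrable_prod_re_diag_mul hint n)
      (.of_forall (hK.norm_det_mul_prod_le hg' hle))

variable {G : ℕ → E2 → ℝ} {g : E2 → ℝ}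

lemma tendsto_dppTerm (hK : IsKernel K) (hG : ∀ k, Measurable (G k)) (hG0 : ∀ k x, 0 ≤ G k x)
    (hGle : ∀ k x, G k x ≤ g x) (hlim : ∀ x, Tendsto (fun k => G k x) atTop (𝓝 (g x)))
    (hint : Integrable fun x => (K x x).re * g x) (n : ℕ) :
    Tendsto (fun k => dppTerm K (G k) n) atTop (𝓝 (dppTerm K g n)) := by
  refine Tendsto.const_mul _ <| tendsto_integral_of_dominated_convergence _ (fun k => ?_)
    (integrable_prod_re_diag_mul hint n)
    (fun k => .of_forall (hK.norm_det_mul_prod_le (hG0 k) (hGle k))) (.of_forall fun x => ?_)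
  · exact (hK.continuous_det n).aestronglyMeasurable.mul
      (Finset.measurable_prod _ fun i _ =>
        Complex.measurable_ofReal.comp ((hG k).comp (measurable_pi_apply i))).aestronglyMeasurable
  · exact tendsto_const_nhds.mul <| tendsto_finsetProd _ fun i _ =>
      (Complex.continuous_ofReal.tendsto _).comp (hlim (x i))

lemma tendsto_tsum_dppTerm (hK : IsKernel K) (hG : ∀ k, Measurable (G k)) (hG0 : ∀ k x, 0 ≤ G k x)
    (hGle : ∀ k x, G k x ≤ g x) (hlim : ∀ x, Tendsto (fun k => G k x) atTop (𝓝 (g x)))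
    (hint : Integrable fun x => (K x x).re * g x) :
    Tendsto (fun k => ∑' n, dppTerm K (G k) n) atTop (𝓝 (∑' n, dppTerm K g n)) :=
  tendsto_tsum_of_dominated_convergence (Real.summable_pow_div_factorial _)
    (hK.tendsto_dppTerm hG hG0 hGle hlim hint)
    (.of_forall fun k => hK.norm_dppTerm_le (hG0 k) (hGle k) hint)

end IsKernel

lemma tendsto_indicator_closedBall_nat {X M : Type*} [PseudoMetricSpace X] [Zero M]
    [TopologicalSpace M] (c : X) (g : X → M) (x : X) :
    Tendsto (fun k : ℕ => (closedBall c k).indicator g x) atTop (𝓝 (g x)) := by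
  obtain ⟨N, hN⟩ := exists_nat_ge (dist x c)
  refine tendsto_const_nhds.congr' (eventually_atTop.mpr ⟨N, fun k hk => ?_⟩)
  exact (Set.indicator_of_mem (mem_closedBall.mpr (hN.trans (Nat.cast_le.mpr hk))) g).symm

lemma monotone_indicator_closedBall_nat {X : Type*} [PseudoMetricSpace X] (c : X)
    (f : X → ℝ≥0∞) : Monotone fun k : ℕ => (closedBall c k).indicator f :=
  fun _ _ hkl => Set.indicator_le_indicator_of_subset
    (closedBall_subset_closedBall (Nat.cast_le.mpr hkl)) fun _ => zero_le

lemma tendsto_integral_expNeg_lintegral {Ω X : Type*} [MeasurableSpace Ω] [MeasurableSpace X]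
    (μ : Measure Ω) [IsFiniteMeasure μ] {Φ : Ω → Measure X} {F : ℕ → X → ℝ≥0∞}
    {f : X → ℝ≥0∞} (hΦF : ∀ k, Measurable fun ω => ∫⁻ x, F k x ∂Φ ω)
    (hF : ∀ k, Measurable (F k)) (hmono : Monotone F)
    (hlim : ∀ x, Tendsto (fun k => F k x) atTop (𝓝 (f x))) :
    Tendsto (fun k => ∫ ω, expNeg (∫⁻ x, F k x ∂Φ ω) ∂μ) atTop
      (𝓝 (∫ ω, expNeg (∫⁻ x, f x ∂Φ ω) ∂μ)) :=
  tendsto_integral_of_dominated_convergence (fun _ => 1)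
    (fun k => (continuous_expNeg.measurable.comp (hΦF k)).aestronglyMeasurable)
    (integrable_const 1) (fun _ => .of_forall fun _ => norm_expNeg_le_one _)
    (.of_forall fun _ => (continuous_expNeg.tendsto _).comp
      (lintegral_tendsto_of_tendsto_of_monotone (fun k => (hF k).aemeasurable)
        (.of_forall fun x _ _ hkl => hmono hkl x) (.of_forall hlim)))

theorem stmt_1_general {Ω : Type} [MeasurableSpace Ω] (μ : Measure Ω) [IsProbabilityMeasure μ]
    (K : E2 → E2 → ℂ) (hK : IsKernel K)
    (Φ : Ω → Measure E2)
    (hΦmeas : ∀ g : E2 → ℝ≥0∞, Measurable g → Measurable fun ω => ∫⁻ x, g x ∂(Φ ω))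
    (hLaplace : DPPLaplaceOnCompact μ Φ K)
    (v : E2 → ℝ) (hv : Measurable v) (hv01 : ∀ x, v x ∈ Set.Icc (0 : ℝ) 1)
    (hconds : SatConds K fun x => negLog (v x)) :
    ((∫ ω, expNeg (∫⁻ x, negLog (v x) ∂(Φ ω)) ∂μ : ℝ) : ℂ) =
      ∑' n : ℕ, dppTerm K (fun x => 1 - v x) n := by
  set g : E2 → ℝ := fun x => 1 - v x
  set F : ℕ → E2 → ℝ≥0∞ := fun k => (closedBall 0 k).indicator fun x => negLog (v x)
  have hexpNeg : ∀ x, expNeg (negLog (v x)) = v x := fun x =>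
    expNeg_negLog (hv01 x).1 (hv01 x).2
  have hg0 : ∀ x, 0 ≤ g x := fun x => sub_nonneg.mpr (hv01 x).2
  have hF : ∀ k, Measurable (F k) := fun k =>
    (measurable_negLog.comp hv).indicator measurableSet_closedBall
  have hFg : ∀ k, (fun x => 1 - expNeg (F k x)) = (closedBall 0 k).indicator g := fun k => by
    ext x
    by_cases hx : x ∈ closedBall (0 : E2) k <;> simp [F, g, hx, hexpNeg, expNeg_zero]
  have hg : Measurable g := measurable_const.sub hv
  have hint : Integrable fun x => (K x x).re * g x := by
    have hfin := hconds.finite_integral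
    simp only [hexpNeg] at hfin
    exact hK.integrable_re_diag_mul hg hg0 hfin
  have hLHS := tendsto_integral_expNeg_lintegral μ (fun k => hΦmeas _ (hF k)) hF
    (monotone_indicator_closedBall_nat 0 _) (tendsto_indicator_closedBall_nat 0 _)
  have hRHS := hK.tendsto_tsum_dppTerm (G := fun k => (closedBall 0 k).indicator g)
    (fun _ => hg.indicator measurableSet_closedBall)
    (fun _ => Set.indicator_nonneg fun x _ => hg0 x)
    (fun _ => Set.indicator_le_self' fun x _ => hg0 x)
    (tendsto_indicator_closedBall_nat 0 g) hint
  refine tendsto_nhds_unique ((Complex.continuous_ofReal.tendsto _).comp hLHS)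
    (hRHS.congr fun k => ?_)
  rw [Function.comp_apply, hLaplace (F k) (hF k)
    ⟨_, isCompact_closedBall 0 k, fun x hx => Set.indicator_of_notMem hx _⟩, hFg k]

/-- Probability generating functional of a DPP: for measurable
`v : ℝ² → [0,1]` such that `-log v` satisfies conditions (a)–(c) with respect to `K`,
`E[∏_{x∈Φ} v(x)] = Σ_n ((-1)^n/n!) ∫ det(K(x_i,x_j)) ∏ (1 - v(x_i)) dx`, where the
product over the atoms of `Φ` (with multiplicity) is `exp(∫ log v dΦ)`. -/
theorem stmt_1 {Ω : Type} [MeasurableSpace Ω] (μ : Measure Ω) [IsProbabilityMeasure μ]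
    (K : E2 → E2 → ℂ) (hK : IsKernel K)
    (Φ : Ω → Measure E2)
    (hΦmeas : ∀ g : E2 → ℝ≥0∞, Measurable g → Measurable fun ω => ∫⁻ x, g x ∂(Φ ω))
    (hΦlocfin : ∀ ω, ∀ s : Set E2, IsCompact s → Φ ω s < ∞)
    (hintensity : ∀ g : E2 → ℝ≥0∞, Measurable g →
      ∫⁻ ω, (∫⁻ x, g x ∂(Φ ω)) ∂μ = ∫⁻ x : E2, ENNReal.ofReal (K x x).re * g x)
    (hLaplace : DPPLaplaceOnCompact μ Φ K)
    (v : E2 → ℝ) (hv : Measurable v) (hv01 : ∀ x, v x ∈ Set.Icc (0 : ℝ) 1)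
    (hconds : SatConds K fun x => negLog (v x)) :
    ((∫ ω, expNeg (∫⁻ x, negLog (v x) ∂(Φ ω)) ∂μ : ℝ) : ℂ) =
      ∑' n : ℕ, dppTerm K (fun x => 1 - v x) n :=
  stmt_1_general μ K hK Φ hΦmeas hLaplace v hv hv01 hconds
end
end

section
/- Let K be a stationary kernel on ℝ², K(x,y) = K₀(x−y), with K(0,0) = K₀(0) > 0, and define the reduced Palm kernel at the origin by K_o^!(x,y) = (1/K(0,0))·(K(x,y)K(0,0) − K(x,0)K(0,y)). Let Φ̃ be a point process on ℝ² that satisfies the DPP Laplace identity with kernel K_o^! on compactly supported functions. Then the nearest neighbor function D(r) = P(Φ̃(B(0,r)) ≥ 1) satisfies, for all r ≥ 0, D(r) = Σ_{n=1}^∞ ((−1)^{n−1}/n!) ∫_{(B(0,r))^n} det(K_o^!(x_i,x_j))_{1≤i,j≤n} dx_1⋯dx_n, and this series moreover equals Σ_{n=1}^∞ ((−1)^{n−1}/n!) ∫_{(B(0,r))^n} (1/K(0,0)) det(K(x_i,x_j))_{0≤i,j≤n} dx_1⋯dx_n where the distinguished point in the (n+1)×(n+1) determinant is x₀ = 0.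 -/
open MeasureTheory Measure Metric Filter
open scoped ENNReal NNReal Real Topology BigOperators ComplexOrder

noncomputable section

/-- `∫_{(B(0,r))^n} det(K(x_i,x_j))_{1≤i,j≤n} dx_1⋯dx_n`. -/
def ballDetInt (K : E2 → E2 → ℂ) (r : ℝ) (n : ℕ) : ℂ :=
  ∫ x in Set.univ.pi fun _ : Fin n => closedBall (0 : E2) r,
    (Matrix.of fun i j : Fin n => K (x i) (x j)).det

/-- `∫_{(B(0,r))^n} det(K(x_i,x_j))_{0≤i,j≤n} dx_1⋯dx_n` with distinguished point `x₀`. -/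
def ballDetIntCons (K : E2 → E2 → ℂ) (x₀ : E2) (r : ℝ) (n : ℕ) : ℂ :=
  ∫ x in Set.univ.pi fun _ : Fin n => closedBall (0 : E2) r,
    (Matrix.of fun i j : Fin (n + 1) =>
      K ((Fin.cons x₀ x : Fin (n + 1) → E2) i) ((Fin.cons x₀ x : Fin (n + 1) → E2) j)).det

/-- The reduced Palm kernel at the origin:
`K_o^!(x,y) = (1/K(0,0))·(K(x,y)K(0,0) − K(x,0)K(0,y))`. -/
def palmKernelO (K : E2 → E2 → ℂ) (x y : E2) : ℂ :=
  (1 / K 0 0) * (K x y * K 0 0 - K x 0 * K 0 y)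

/-!
Testing the Laplace identity against `t · 1_B`, `B = B(0,r)`, gives `E[e^{-t X}] = F(1 - e^{-t})`
for `X = Φ̃(B)` and `F(s) = ∑ cₙ sⁿ`, `cₙ = (-1)ⁿ/n! ∫_{Bⁿ} det K_o^!`. The Schur complement
identity `det (K_o^!(xᵢ,xⱼ)) = det (K(xᵢ,xⱼ))_{0≤i,j≤n} / K(0,0)` with `x₀ = 0` turns the
integrands into determinants of positive semidefinite matrices with diagonal `λ = K(0,0)`, which
AM-GM on the eigenvalues bounds by `λⁿ⁺¹`; hence `‖cₙ‖ ≤ (λ|B|)ⁿ/n!` and `F` is Lipschitz at `1`.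
Letting `t → ∞` gives `P(X = 0) = F(1)`, and then `E[e^{-t X}] - P(X = 0) = O(e^{-t})` leaves no
mass of `X` in `(0,1)` (the random measure is not assumed integer-valued).
So `D(r) = 1 - F(1) = -∑_{n≥1} cₙ`.
-/

theorem Matrix.det_succ_eq_mul_det_schur {R : Type*} [Field R] {n : ℕ}
    (A : Matrix (Fin (n + 1)) (Fin (n + 1)) R) (h : A 0 0 ≠ 0) :
    A.det = A 0 0 *
      (Matrix.of fun i j : Fin n => A i.succ j.succ - A i.succ 0 * A 0 j.succ / A 0 0).det := by
  set c : Fin (n + 1) → R := Fin.cases 0 fun i => A i.succ 0 / A 0 0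
  set B : Matrix (Fin (n + 1)) (Fin (n + 1)) R := Matrix.of fun i j => A i j - c i * A 0 j
  have hAB : A.det = B.det :=
    Matrix.det_eq_of_forall_row_eq_smul_add_const c 0 rfl fun i j => by
      simp [B, show c 0 = 0 from rfl]
  have hB0 : ∀ i : Fin n, B i.succ 0 = 0 := fun i => by
    simp only [Matrix.of_apply, Fin.cases_succ, B, c]; field_simp; ring
  rw [hAB, Matrix.det_succ_column_zero, Fin.sum_univ_succ]
  simp only [hB0, mul_zero, zero_mul, Finset.sum_const_zero, add_zero, Fin.val_zero, pow_zero,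
    one_mul, Fin.succAbove_zero]
  congr 2
  · simp [B, show c 0 = 0 from rfl]
  · ext i j
    simp only [Matrix.submatrix_apply, Matrix.of_apply, Fin.cases_succ, sub_right_inj, B, c]
    ring

theorem Real.prod_le_pow_card_of_sum_eq {ι : Type*} [Fintype ι] {z : ι → ℝ} (hz : ∀ i, 0 ≤ z i)
    {c : ℝ} (hsum : ∑ i, z i = Fintype.card ι * c) : ∏ i, z i ≤ c ^ Fintype.card ι := by
  rcases Nat.eq_zero_or_pos (Fintype.card ι) with hm | hm
  · simp [Finset.univ_eq_empty_iff.mpr (Fintype.card_eq_zero_iff.mp hm), hm]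
  set m := Fintype.card ι
  have hm' : (m : ℝ) ≠ 0 := by positivity
  have amgm := Real.geom_mean_le_arith_mean_weighted Finset.univ (fun _ => (m : ℝ)⁻¹) z
    (fun _ _ => by positivity) (by simp [m, hm']) (fun i _ => hz i)
  rw [← Finset.mul_sum, hsum, inv_mul_cancel_left₀ hm'] at amgm
  calc ∏ i, z i = (∏ i, z i ^ ((m : ℝ)⁻¹)) ^ m := by
        rw [← Finset.prod_pow]
        refine Finset.prod_congr rfl fun i _ => ?_
        rw [← Real.rpow_natCast, ← Real.rpow_mul (hz i), inv_mul_cancel₀ hm', Real.rpow_one]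
    _ ≤ c ^ m := pow_le_pow_left₀ (Finset.prod_nonneg fun i _ => by positivity [hz i]) amgm m

theorem Matrix.PosSemidef.norm_det_le_pow {𝕜 ι : Type*} [RCLike 𝕜] [Fintype ι] [DecidableEq ι]
    {A : Matrix ι ι 𝕜} (hA : A.PosSemidef) {c : ℝ} (hdiag : ∀ i, A i i = c) :
    ‖A.det‖ ≤ c ^ Fintype.card ι := by
  have htrace : ∑ i, hA.1.eigenvalues i = Fintype.card ι * c := by
    have := hA.1.trace_eq_sum_eigenvalues
    simp only [Matrix.trace, Matrix.diag, hdiag, Finset.sum_const, Finset.card_univ,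
      nsmul_eq_mul] at this
    exact_mod_cast this.symm
  rw [hA.1.det_eq_prod_eigenvalues, norm_prod]
  simp_rw [RCLike.norm_ofReal, abs_of_nonneg (hA.eigenvalues_nonneg _)]
  exact Real.prod_le_pow_card_of_sum_eq hA.eigenvalues_nonneg htrace

lemma det_palmKernelO {K : E2 → E2 → ℂ} (hK : K 0 0 ≠ 0) {n : ℕ} (x : Fin n → E2) :
    (Matrix.of fun i j : Fin n => palmKernelO K (x i) (x j)).det =
      1 / K 0 0 * (Matrix.of fun i j : Fin (n + 1) =>
        K ((Fin.cons 0 x : Fin (n + 1) → E2) i) ((Fin.cons 0 x : Fin (n + 1) → E2) j)).det := by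
  rw [Matrix.det_succ_eq_mul_det_schur _ (by simpa using hK)]
  simp only [Matrix.of_apply, Fin.cons_zero, Fin.cons_succ]
  rw [← mul_assoc, one_div_mul_cancel hK, one_mul]
  congr 1
  ext i j
  simp only [Matrix.of_apply, palmKernelO]
  field_simp

lemma ballDetInt_palmKernelO {K : E2 → E2 → ℂ} (hK : K 0 0 ≠ 0) (r : ℝ) (n : ℕ) :
    ballDetInt (palmKernelO K) r n = 1 / K 0 0 * ballDetIntCons K 0 r n := by
  rw [ballDetInt, ballDetIntCons, ← integral_const_mul]
  simp_rw [det_palmKernelO hK]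

lemma ballDetInt_zero (K : E2 → E2 → ℂ) (r : ℝ) : ballDetInt K r 0 = 1 := by
  have : (Set.univ.pi fun _ : Fin 0 => closedBall (0 : E2) r) = Set.univ :=
    Set.eq_univ_of_forall fun x i => i.elim0
  simp [ballDetInt, this, measureReal_def, volume_pi]

lemma norm_ballDetIntCons_le {K : E2 → E2 → ℂ} (hK : IsKernel K) {lam : ℝ}
    (hdiag : ∀ x, K x x = lam) (x₀ : E2) (r : ℝ) (n : ℕ) :
    ‖ballDetIntCons K x₀ r n‖ ≤ lam ^ (n + 1) * volume.real (closedBall (0 : E2) r) ^ n := by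
  have hvol : volume (Set.univ.pi fun _ : Fin n => closedBall (0 : E2) r) =
      volume (closedBall (0 : E2) r) ^ n := by
    simp [volume_pi, Measure.pi_pi]
  have hbound := norm_setIntegral_le_of_norm_le_const (μ := volume) (C := lam ^ (n + 1))
    (hvol ▸ ENNReal.pow_lt_top measure_closedBall_lt_top) fun x _ => by
      simpa using (hK.posSemidef (n + 1) (Fin.cons x₀ x)).norm_det_le_pow fun i => hdiag _
  rwa [measureReal_def, hvol, ENNReal.toReal_pow, ← measureReal_def] at hbound

lemma norm_ballDetInt_palmKernelO_le {K : E2 → E2 → ℂ} (hK : IsKernel K) {lam : ℝ}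
    (hlam : 0 < lam) (hdiag : ∀ x, K x x = lam) (r : ℝ) (n : ℕ) :
    ‖ballDetInt (palmKernelO K) r n‖ ≤ (lam * volume.real (closedBall (0 : E2) r)) ^ n := by
  have hK0 : K 0 0 ≠ 0 := by rw [hdiag]; exact_mod_cast hlam.ne'
  set V := volume.real (closedBall (0 : E2) r)
  calc ‖ballDetInt (palmKernelO K) r n‖ = ‖ballDetIntCons K 0 r n‖ / lam := by
        rw [ballDetInt_palmKernelO hK0, norm_mul, hdiag, norm_div, norm_one, Complex.norm_real,
          Real.norm_of_nonneg hlam.le, one_div_mul_eq_div]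
    _ ≤ lam ^ (n + 1) * V ^ n / lam := by gcongr; exact norm_ballDetIntCons_le hK hdiag 0 r n
    _ = (lam * V) ^ n := by field_simp; ring

lemma norm_pow_sub_one_le {R : Type*} [NormedRing R] [NormOneClass R] {z : R} (hz : ‖z‖ ≤ 1)
    (n : ℕ) : ‖z ^ n - 1‖ ≤ n * ‖z - 1‖ := by
  rw [← geom_sum_mul]
  refine (norm_mul_le _ _).trans (mul_le_mul_of_nonneg_right ?_ (norm_nonneg _))
  calc ‖∑ i ∈ Finset.range n, z ^ i‖ ≤ ∑ i ∈ Finset.range n, ‖z‖ ^ i :=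
        (norm_sum_le _ _).trans (Finset.sum_le_sum fun i _ => norm_pow_le _ _)
    _ ≤ ∑ _i ∈ Finset.range n, (1 : ℝ) :=
        Finset.sum_le_sum fun i _ => pow_le_one₀ (norm_nonneg _) hz
    _ = n := by simp

lemma summable_norm_of_summable_mul_norm {E : Type*} [SeminormedAddCommGroup E] {c : ℕ → E}
    (hc : Summable fun n : ℕ => n * ‖c n‖) : Summable fun n => ‖c n‖ := by
  refine (summable_nat_add_iff 1).mp <| ((summable_nat_add_iff 1).mpr hc).of_nonneg_of_le
    (fun _ => norm_nonneg _) fun n => ?_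
  push_cast
  nlinarith [norm_nonneg (c (n + 1)), (n.cast_nonneg : (0 : ℝ) ≤ n)]

lemma norm_tsum_mul_pow_sub_tsum_le {c : ℕ → ℂ} (hc : Summable fun n : ℕ => n * ‖c n‖)
    {z : ℂ} (hz : ‖z‖ ≤ 1) :
    ‖∑' n, c n * z ^ n - ∑' n, c n‖ ≤ (∑' n : ℕ, n * ‖c n‖) * ‖z - 1‖ := by
  have hc' := summable_norm_of_summable_mul_norm hc
  have hbound : ∀ n, ‖c n * z ^ n - c n‖ ≤ n * ‖c n‖ * ‖z - 1‖ := fun n => by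
    rw [← mul_sub_one, norm_mul, mul_comm (n : ℝ), mul_assoc]
    exact mul_le_mul_of_nonneg_left (norm_pow_sub_one_le hz n) (norm_nonneg _)
  have hzc : Summable fun n => c n * z ^ n :=
    Summable.of_norm_bounded hc' fun n => by
      rw [norm_mul, norm_pow]
      exact mul_le_of_le_one_right (norm_nonneg _) (pow_le_one₀ (norm_nonneg _) hz)
  rw [← hzc.tsum_sub hc'.of_norm, ← tsum_mul_right]
  exact tsum_of_norm_bounded (hc.mul_right _).hasSum hbound

lemma summable_mul_norm_of_norm_le_pow_div_factorial {E : Type*} [SeminormedAddCommGroup E]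
    {c : ℕ → E} {A : ℝ} (hc : ∀ n, ‖c n‖ ≤ A ^ n / n.factorial) :
    Summable fun n : ℕ => n * ‖c n‖ := by
  have hA : 0 ≤ A := by simpa using (norm_nonneg _).trans (hc 1)
  refine (Real.summable_pow_div_factorial (2 * A)).of_nonneg_of_le (fun n => by positivity)
    fun n => ?_
  calc n * ‖c n‖ ≤ 2 ^ n * (A ^ n / n.factorial) :=
        mul_le_mul (by exact_mod_cast n.lt_two_pow_self.le) (hc n) (norm_nonneg _) (by positivity)
    _ = (2 * A) ^ n / n.factorial := by rw [mul_pow, mul_div_assoc]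

lemma expNeg_top_mul (a : ℝ≥0∞) : expNeg (∞ * a) = if a = 0 then 1 else 0 := by
  split_ifs with ha
  · simp [expNeg, ha]
  · simp [expNeg, ENNReal.top_mul ha]

lemma expNeg_ofReal_mul {t : ℝ} (ht : 0 ≤ t) {a : ℝ≥0∞} (ha : a ≠ ∞) :
    expNeg (ENNReal.ofReal t * a) = Real.exp (-(t * a.toReal)) := by
  rw [expNeg, if_neg (ENNReal.mul_ne_top ENNReal.ofReal_ne_top ha), ENNReal.toReal_mul,
    ENNReal.toReal_ofReal ht]

section Probability

variable {Ω : Type*} [MeasurableSpace Ω] {μ : Measure Ω}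

lemma measureReal_add_mul_exp_le_integral_exp [IsFiniteMeasure μ] {Y : Ω → ℝ}
    (hY : Measurable Y) (hY0 : ∀ ω, 0 ≤ Y ω) {b t : ℝ} (ht : 0 ≤ t) :
    μ.real {ω | Y ω = 0} + μ.real {ω | 0 < Y ω ∧ Y ω ≤ b} * Real.exp (-(t * b)) ≤
      ∫ ω, Real.exp (-(t * Y ω)) ∂μ := by
  set S := {ω | 0 < Y ω ∧ Y ω ≤ b}
  set Z := {ω | Y ω = 0}
  have hS : MeasurableSet S :=
    (measurableSet_lt measurable_const hY).inter (measurableSet_le hY measurable_const)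
  have hZ : MeasurableSet Z := hY (measurableSet_singleton 0)
  have hpt : ∀ ω, Z.indicator 1 ω + S.indicator (fun _ => Real.exp (-(t * b))) ω ≤
      Real.exp (-(t * Y ω)) := fun ω => by
    by_cases hωZ : ω ∈ Z
    · have hωS : ω ∉ S := fun hωS => hωS.1.ne' hωZ
      simp [hωZ, hωS, show Y ω = 0 from hωZ]
    by_cases hωS : ω ∈ S
    · simp only [Set.indicator_of_notMem hωZ, Set.indicator_of_mem hωS, zero_add]
      exact Real.exp_le_exp.mpr (by nlinarith [hωS.2])
    · simp [hωZ, hωS, Real.exp_nonneg]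
  have hZint : Integrable (Z.indicator (1 : Ω → ℝ)) μ := (integrable_const 1).indicator hZ
  have hSint : Integrable (S.indicator fun _ => Real.exp (-(t * b))) μ :=
    (integrable_const _).indicator hS
  have hexpint : Integrable (fun ω => Real.exp (-(t * Y ω))) μ :=
    (integrable_const (1 : ℝ)).mono' (hY.const_mul t).neg.exp.aestronglyMeasurable
      (.of_forall fun ω => by
        rw [Real.norm_eq_abs, Real.abs_exp, Real.exp_le_one_iff, neg_nonpos]
        exact mul_nonneg ht (hY0 ω))
  have hint := integral_mono (hZint.add hSint) hexpint hpt
  rwa [integral_add' hZint hSint, integral_indicator_one hZ, integral_indicator_const _ hS,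
    smul_eq_mul] at hint

lemma measure_pos_le_eq_zero_of_integral_exp_le [IsFiniteMeasure μ] {Y : Ω → ℝ}
    (hY : Measurable Y) (hY0 : ∀ ω, 0 ≤ Y ω) {a b C : ℝ} (hba : b < a)
    (h : ∀ t > 0, ∫ ω, Real.exp (-(t * Y ω)) ∂μ ≤
      μ.real {ω | Y ω = 0} + C * Real.exp (-(t * a))) :
    μ {ω | 0 < Y ω ∧ Y ω ≤ b} = 0 := by
  have hdecay : ∀ t > 0, μ.real {ω | 0 < Y ω ∧ Y ω ≤ b} ≤ C * Real.exp (-(t * (a - b))) := by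
    intro t ht
    have hab : Real.exp (-(t * a)) = Real.exp (-(t * (a - b))) * Real.exp (-(t * b)) := by
      rw [← Real.exp_add]; ring_nf
    have := (measureReal_add_mul_exp_le_integral_exp (μ := μ) (b := b) hY hY0 ht.le).trans (h t ht)
    rw [hab, ← mul_assoc, add_le_add_iff_left] at this
    exact le_of_mul_le_mul_right this (Real.exp_pos _)
  have htend : Tendsto (fun t => C * Real.exp (-(t * (a - b)))) atTop (𝓝 0) := by
    simpa using (Real.tendsto_exp_atBot.comp
      (tendsto_neg_atTop_atBot.comp (tendsto_id.atTop_mul_const (sub_pos.mpr hba)))).const_mul C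
  have hS0 := ge_of_tendsto htend ((eventually_gt_atTop 0).mono hdecay)
  exact (measureReal_eq_zero_iff).mp (le_antisymm hS0 measureReal_nonneg)

lemma measure_pos_lt_eq_zero_of_integral_exp_le [IsFiniteMeasure μ] {Y : Ω → ℝ}
    (hY : Measurable Y) (hY0 : ∀ ω, 0 ≤ Y ω) {a C : ℝ}
    (h : ∀ t > 0, ∫ ω, Real.exp (-(t * Y ω)) ∂μ ≤
      μ.real {ω | Y ω = 0} + C * Real.exp (-(t * a))) :
    μ {ω | 0 < Y ω ∧ Y ω < a} = 0 := by
  have hcover : {ω | 0 < Y ω ∧ Y ω < a} ⊆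
      ⋃ k : ℕ, {ω | 0 < Y ω ∧ Y ω ≤ a - 1 / (k + 1)} := fun ω ⟨hpos, hlt⟩ => by
    obtain ⟨k, hk⟩ := exists_nat_one_div_lt (sub_pos.mpr hlt)
    exact Set.mem_iUnion.mpr ⟨k, hpos, by linarith⟩
  exact measure_mono_null hcover <| measure_iUnion_null fun k =>
    measure_pos_le_eq_zero_of_integral_exp_le hY hY0 (by simp; positivity) h

lemma integral_expNeg_top_mul {X : Ω → ℝ≥0∞} (hX : Measurable X) :
    ∫ ω, expNeg (∞ * X ω) ∂μ = μ.real {ω | X ω = 0} := by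
  have hZ : MeasurableSet {ω | X ω = 0} := hX (measurableSet_singleton 0)
  rw [← integral_indicator_one hZ]
  simp_rw [expNeg_top_mul, Set.indicator_apply]
  rfl

lemma integral_exp_neg_mul_toReal_le {X : Ω → ℝ≥0∞} (hXfin : ∀ ω, X ω ≠ ∞) {c : ℕ → ℂ}
    (hc : Summable fun n : ℕ => n * ‖c n‖)
    (hL : ∀ t, ((∫ ω, expNeg (t * X ω) ∂μ : ℝ) : ℂ) =
      ∑' n, c n * ((1 - expNeg t : ℝ) : ℂ) ^ n)
    (hzero : (μ.real {ω | X ω = 0} : ℂ) = ∑' n, c n) {t : ℝ} (ht : 0 < t) :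
    ∫ ω, Real.exp (-(t * (X ω).toReal)) ∂μ ≤
      μ.real {ω | X ω = 0} + (∑' n : ℕ, n * ‖c n‖) * Real.exp (-t) := by
  have hLt := hL (ENNReal.ofReal t)
  simp_rw [expNeg_ofReal_mul ht.le (hXfin _)] at hLt
  rw [show expNeg (ENNReal.ofReal t) = Real.exp (-t) by
    simpa using expNeg_ofReal_mul ht.le ENNReal.one_ne_top] at hLt
  have hlip := norm_tsum_mul_pow_sub_tsum_le hc (z := ((1 - Real.exp (-t) : ℝ) : ℂ)) (by
    rw [Complex.norm_real, Real.norm_of_nonneg (by simp [ht.le])]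
    linarith [Real.exp_pos (-t)])
  rw [← hLt, ← hzero, ← Complex.ofReal_sub, Complex.norm_real, ← Complex.ofReal_one,
    ← Complex.ofReal_sub, Complex.norm_real, sub_sub_cancel_left, norm_neg,
    Real.norm_of_nonneg (Real.exp_pos _).le, Real.norm_eq_abs] at hlip
  linarith [le_abs_self (∫ ω, Real.exp (-(t * (X ω).toReal)) ∂μ - μ.real {ω | X ω = 0})]

theorem measureReal_one_le_eq_one_sub_tsum [IsProbabilityMeasure μ] {X : Ω → ℝ≥0∞}
    (hX : Measurable X) (hXfin : ∀ ω, X ω ≠ ∞) {c : ℕ → ℂ}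
    (hc : Summable fun n : ℕ => n * ‖c n‖)
    (hL : ∀ t, ((∫ ω, expNeg (t * X ω) ∂μ : ℝ) : ℂ) =
      ∑' n, c n * ((1 - expNeg t : ℝ) : ℂ) ^ n) :
    (μ.real {ω | 1 ≤ X ω} : ℂ) = 1 - ∑' n, c n := by
  have hzero : (μ.real {ω | X ω = 0} : ℂ) = ∑' n, c n := by
    have h := hL ∞
    rw [integral_expNeg_top_mul hX] at h
    simpa [expNeg] using h
  have hZ : {ω | (X ω).toReal = 0} = {ω | X ω = 0} := by
    ext ω; simp [ENNReal.toReal_eq_zero_iff, hXfin ω]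
  have hmid := measure_pos_lt_eq_zero_of_integral_exp_le (μ := μ) (a := 1)
    (C := ∑' n : ℕ, n * ‖c n‖) hX.ennreal_toReal (fun ω => ENNReal.toReal_nonneg) fun t ht => by
      simpa [hZ] using integral_exp_neg_mul_toReal_le hXfin hc hL hzero ht
  have hlt : μ {ω | X ω < 1} = μ {ω | X ω = 0} := by
    refine le_antisymm ?_ (measure_mono fun ω (hω : X ω = 0) => by simp [hω])
    calc μ {ω | X ω < 1} ≤ μ ({ω | X ω = 0} ∪ {ω | 0 < (X ω).toReal ∧ (X ω).toReal < 1}) :=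
          measure_mono fun ω (hω : X ω < 1) => by
            by_cases h0 : X ω = 0
            · exact Or.inl h0
            · refine Or.inr ⟨ENNReal.toReal_pos h0 (hXfin ω), ?_⟩
              simpa using (ENNReal.toReal_lt_toReal (hXfin ω) ENNReal.one_ne_top).mpr hω
      _ ≤ μ {ω | X ω = 0} := (measure_union_le _ _).trans (by rw [hmid, add_zero])
  have hcompl : {ω | 1 ≤ X ω} = {ω | X ω < 1}ᶜ := by ext; simp
  rw [hcompl, probReal_compl_eq_one_sub (measurableSet_lt hX measurable_const),
    measureReal_def, hlt, ← measureReal_def]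
  push_cast
  rw [hzero]

end Probability

lemma DPPLaplaceOnCompact.integral_expNeg_mul_closedBall {Ω : Type} [MeasurableSpace Ω]
    {μ : Measure Ω} {Φ : Ω → Measure E2} {K : E2 → E2 → ℂ} (hΦ : DPPLaplaceOnCompact μ Φ K)
    (r : ℝ) (t : ℝ≥0∞) :
    ((∫ ω, expNeg (t * Φ ω (closedBall (0 : E2) r)) ∂μ : ℝ) : ℂ) =
      ∑' n : ℕ, (-1 : ℂ) ^ n / n.factorial * ballDetInt K r n * ((1 - expNeg t : ℝ) : ℂ) ^ n := by
  set B := closedBall (0 : E2) r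
  have hB : MeasurableSet B := measurableSet_closedBall
  have h := hΦ (B.indicator fun _ => t) (measurable_const.indicator hB)
    ⟨B, isCompact_closedBall _ _, fun x hx => Set.indicator_of_notMem hx _⟩
  simp_rw [lintegral_indicator_const hB] at h
  rw [h]
  refine tsum_congr fun n => ?_
  set S := Set.univ.pi fun _ : Fin n => B
  set c := ((1 - expNeg t : ℝ) : ℂ)
  have hg : ∀ z, ((1 - expNeg (B.indicator (fun _ => t) z) : ℝ) : ℂ) = c * B.indicator 1 z :=
    fun z => by by_cases hz : z ∈ B <;> simp [c, hz, expNeg]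
  have hpi : ∀ x : Fin n → E2, ∏ i, B.indicator (1 : E2 → ℂ) (x i) = S.indicator 1 x :=
    fun x => by simpa using (Set.indicator_pi_one_apply Finset.univ (fun _ => B) x).symm
  have hint : ∀ x : Fin n → E2,
      (Matrix.of fun i j => K (x i) (x j)).det * (c ^ n * S.indicator 1 x) =
        c ^ n * S.indicator (fun x => (Matrix.of fun i j => K (x i) (x j)).det) x :=
    fun x => by by_cases hx : x ∈ S <;> simp [hx, mul_comm]
  simp_rw [dppTerm, hg, Finset.prod_mul_distrib, Finset.prod_const, Finset.card_univ,
    Fintype.card_fin, hpi, hint]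
  rw [integral_const_mul, integral_indicator (MeasurableSet.univ_pi fun _ => hB), ballDetInt]
  ring


theorem stmt_5_general {Ω : Type} [MeasurableSpace Ω] (μ : Measure Ω) [IsProbabilityMeasure μ]
    (K₀ : E2 → ℂ) (lam : ℝ) (hlam : 0 < lam) (hK₀0 : K₀ 0 = (lam : ℂ))
    (hker : IsKernel fun x y => K₀ (x - y))
    (Φ : Ω → Measure E2)
    (hΦmeas : ∀ g : E2 → ℝ≥0∞, Measurable g → Measurable fun ω => ∫⁻ x, g x ∂(Φ ω))
    (hΦlocfin : ∀ ω, ∀ s : Set E2, IsCompact s → Φ ω s < ∞)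
    (hLaplace : DPPLaplaceOnCompact μ Φ (palmKernelO fun x y => K₀ (x - y)))
    (r : ℝ) :
    (((μ {ω | 1 ≤ Φ ω (closedBall (0 : E2) r)}).toReal : ℝ) : ℂ) =
      ∑' n : ℕ, ((-1 : ℂ) ^ n / (n + 1).factorial) *
        ballDetInt (palmKernelO fun x y => K₀ (x - y)) r (n + 1) ∧
    (∑' n : ℕ, ((-1 : ℂ) ^ n / (n + 1).factorial) *
        ballDetInt (palmKernelO fun x y => K₀ (x - y)) r (n + 1)) =
      ∑' n : ℕ, ((-1 : ℂ) ^ n / (n + 1).factorial) *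
        ((1 / K₀ 0) * ballDetIntCons (fun x y => K₀ (x - y)) 0 r (n + 1)) := by
  set K : E2 → E2 → ℂ := fun x y => K₀ (x - y)
  set B := closedBall (0 : E2) r
  have hdiag : ∀ x, K x x = lam := fun x => by simp [K, hK₀0]
  have hK00 : K 0 0 ≠ 0 := by rw [hdiag]; exact_mod_cast hlam.ne'
  refine ⟨?_, tsum_congr fun n => by rw [ballDetInt_palmKernelO hK00]; simp [K]⟩
  set c : ℕ → ℂ := fun n => (-1 : ℂ) ^ n / n.factorial * ballDetInt (palmKernelO K) r n
  have hc : Summable fun n : ℕ => n * ‖c n‖ :=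
    summable_mul_norm_of_norm_le_pow_div_factorial (A := lam * volume.real B) fun n => by
      rw [norm_mul, norm_div, norm_pow, norm_neg, norm_one, one_pow, Complex.norm_natCast,
        one_div_mul_eq_div]
      exact div_le_div_of_nonneg_right (norm_ballDetInt_palmKernelO_le hker hlam hdiag r n)
        n.factorial.cast_nonneg
  have hX : Measurable fun ω => Φ ω B := by
    have hB : MeasurableSet B := measurableSet_closedBall
    simpa [lintegral_indicator_one hB] using hΦmeas (B.indicator 1) (measurable_one.indicator hB)
  have hD := measureReal_one_le_eq_one_sub_tsum (μ := μ) hX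
    (fun ω => (hΦlocfin ω B (isCompact_closedBall 0 r)).ne) hc
    (hLaplace.integral_expNeg_mul_closedBall r)
  rw [← measureReal_def, hD, (summable_norm_of_summable_mul_norm hc).of_norm.tsum_eq_zero_add,
    show c 0 = 1 by simp [c, ballDetInt_zero], sub_add_cancel_left, ← tsum_neg]
  refine tsum_congr fun n => ?_
  simp only [c, pow_succ]
  ring

/-- Nearest neighbor function of a stationary DPP: if `Φ̃` satisfies
the DPP Laplace identity with the reduced Palm kernel `K_o^!`, then
`D(r) = P(Φ̃(B(0,r)) ≥ 1) = Σ_{n≥1} ((-1)^{n-1}/n!) ∫_{B(0,r)^n} det(K_o^!(x_i,x_j)) dx`,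
and this series equals
`Σ_{n≥1} ((-1)^{n-1}/n!) ∫_{B(0,r)^n} (1/K(0,0)) det(K(x_i,x_j))_{0≤i,j≤n} dx` with
distinguished point `x₀ = 0`. -/
theorem stmt_5 {Ω : Type} [MeasurableSpace Ω] (μ : Measure Ω) [IsProbabilityMeasure μ]
    (K₀ : E2 → ℂ) (lam : ℝ) (hlam : 0 < lam) (hK₀0 : K₀ 0 = (lam : ℂ))
    (hker : IsKernel fun x y => K₀ (x - y))
    (Φ : Ω → Measure E2)
    (hΦmeas : ∀ g : E2 → ℝ≥0∞, Measurable g → Measurable fun ω => ∫⁻ x, g x ∂(Φ ω))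
    (hΦlocfin : ∀ ω, ∀ s : Set E2, IsCompact s → Φ ω s < ∞)
    (hLaplace : DPPLaplaceOnCompact μ Φ (palmKernelO fun x y => K₀ (x - y)))
    (r : ℝ) (hr : 0 ≤ r) :
    (((μ {ω | 1 ≤ Φ ω (closedBall (0 : E2) r)}).toReal : ℝ) : ℂ) =
      ∑' n : ℕ, ((-1 : ℂ) ^ n / (n + 1).factorial) *
        ballDetInt (palmKernelO fun x y => K₀ (x - y)) r (n + 1) ∧
    (∑' n : ℕ, ((-1 : ℂ) ^ n / (n + 1).factorial) *
        ballDetInt (palmKernelO fun x y => K₀ (x - y)) r (n + 1)) =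
      ∑' n : ℕ, ((-1 : ℂ) ^ n / (n + 1).factorial) *
        ((1 / K₀ 0) * ballDetIntCons (fun x y => K₀ (x - y)) 0 r (n + 1)) :=
  stmt_5_general μ K₀ lam hlam hK₀0 hker Φ hΦmeas hΦlocfin hLaplace r
end
end

section
/- Fix λ > 0, α > 0, β > 2, P > 0, r₀ ≥ 0, and set x₀ = (r₀,0) ∈ ℝ². Then P ∫_{ℝ²} λ(1 − exp(−2‖x−x₀‖²/α²)) · min(1, ‖x‖^{−β}) dx = Pπλβ/(β−2) − 2Pπλ exp(−2r₀²/α²) (A₁(r₀) + A₂(r₀)), where A₁(r₀) = ∫_0^1 exp(−2r²/α²) I₀(4rr₀/α²) r dr, A₂(r₀) = ∫_1^∞ exp(−2r²/α²) r^{1−β} I₀(4rr₀/α²) dr, and I₀(z) = (1/2π)∫_0^{2π} exp(z cos θ) dθ is the modified Bessel function of the first kind of order 0. (This is the mean interference at the origin for the Gauss determinantal point process with parameters (λ,α), conditioned on a serving base station at x₀, with path loss l(x) = min(1,‖x‖^{−β}), since the reduced Palm kernel of the Gauss kernel K(x,y) = λexp(−‖x−y‖²/α²) has diagonal K^!_{x₀}(x,x)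 = λ(1 − exp(−2‖x−x₀‖²/α²)).) -/
open MeasureTheory Metric intervalIntegral
open scoped Real Topology BigOperators

noncomputable section

/-- The point `(a, b)` of `ℝ²`. -/
def pt (a b : ℝ) : E2 := (EuclideanSpace.equiv (Fin 2) ℝ).symm ![a, b]

/-- The modified Bessel function of the first kind of order 0:
`I₀(z) = (1/2π) ∫_0^{2π} exp(z cos θ) dθ`. -/
def besselI0 (z : ℝ) : ℝ :=
  (1 / (2 * Real.pi)) * ∫ θ in (0 : ℝ)..(2 * Real.pi), Real.exp (z * Real.cos θ)

/-!
Write `ℓ(r) = min 1 (r ^ (-β))`. The integrand is `Pλ (ℓ(‖x‖) - e^{-2‖x - x₀‖²/α²} ℓ(‖x‖))`;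
the first term is radial and integrates to `2π ∫₀^∞ r ℓ(r) dr = πβ/(β-2)`. For the second, in
polar coordinates `‖x - x₀‖² = r² + r₀² - 2 r r₀ cos θ`, so the angular integral of the Gaussian
factor is `2π e^{-2(r² + r₀²)/α²} I₀(4 r r₀/α²)`, and the radial integral splits at `r = 1`, where
`ℓ` switches from `1` to `r^{-β}`. Integrability comes from `I₀(z) ≤ e^{|z|}`, which bounds
`e^{-2r²/α²} I₀(4 r r₀/α²)` by the constant `e^{2r₀²/α²}`.
-/

open Set Real

theorem integral_exp_mul_cos_neg_pi_pi (z : ℝ) :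
    ∫ θ in -π..π, exp (z * cos θ) = 2 * π * besselI0 z := by
  have hper : Function.Periodic (fun θ => exp (z * cos θ)) (2 * π) := fun θ => by
    simp [cos_add_two_pi]
  have h := hper.intervalIntegral_add_eq (-π) 0
  rw [show -π + 2 * π = π by ring, zero_add] at h
  rw [besselI0, h]
  field_simp

theorem besselI0_nonneg (z : ℝ) : 0 ≤ besselI0 z :=
  mul_nonneg (by positivity) (intervalIntegral.integral_nonneg (by positivity) fun _ _ => by
    positivity)

theorem besselI0_le_exp_abs (z : ℝ) : besselI0 z ≤ exp |z| := by
  have hmono : ∫ θ in (0 : ℝ)..2 * π, exp (z * cos θ) ≤ ∫ _ in (0 : ℝ)..2 * π, exp |z| := by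
    refine intervalIntegral.integral_mono_on (by positivity)
      (Continuous.intervalIntegrable (by fun_prop) _ _) intervalIntegrable_const fun θ _ => ?_
    refine exp_le_exp.2 ((le_abs_self _).trans ?_)
    rw [abs_mul]
    exact mul_le_of_le_one_right (abs_nonneg z) (abs_cos_le_one θ)
  rw [intervalIntegral.integral_const, smul_eq_mul, sub_zero] at hmono
  rw [besselI0, one_div, inv_mul_le_iff₀ (by positivity)]
  exact hmono

@[fun_prop]
theorem continuous_besselI0 : Continuous besselI0 :=
  continuous_const.mul
    (intervalIntegral.continuous_parametric_intervalIntegral_of_continuous' (by fun_prop) _ _)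

theorem exp_neg_mul_besselI0_le (r r₀ α : ℝ) :
    exp (-(2 * r ^ 2 / α ^ 2)) * besselI0 (4 * r * r₀ / α ^ 2) ≤ exp (2 * r₀ ^ 2 / α ^ 2) := by
  have hz : |4 * r * r₀ / α ^ 2| ≤ 2 * r ^ 2 / α ^ 2 + 2 * r₀ ^ 2 / α ^ 2 := by
    rw [abs_div, abs_of_nonneg (sq_nonneg α), ← add_div]
    gcongr
    rw [abs_le]
    constructor <;> nlinarith [sq_nonneg (r - r₀), sq_nonneg (r + r₀)]
  calc exp (-(2 * r ^ 2 / α ^ 2)) * besselI0 (4 * r * r₀ / α ^ 2)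
      ≤ exp (-(2 * r ^ 2 / α ^ 2)) * exp |4 * r * r₀ / α ^ 2| := by
        gcongr; exact besselI0_le_exp_abs _
    _ ≤ exp (2 * r₀ ^ 2 / α ^ 2) := by rw [← exp_add, exp_le_exp]; linarith

theorem min_one_rpow_neg_of_le_one {β r : ℝ} (hβ : 0 ≤ β) (hr₀ : 0 < r) (hr₁ : r ≤ 1) :
    min 1 (r ^ (-β)) = 1 :=
  min_eq_left (one_le_rpow_of_pos_of_le_one_of_nonpos hr₀ hr₁ (neg_nonpos.2 hβ))

theorem min_one_rpow_neg_of_one_le {β r : ℝ} (hβ : 0 ≤ β) (hr : 1 ≤ r) :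
    min 1 (r ^ (-β)) = r ^ (-β) :=
  min_eq_right (rpow_le_one_of_one_le_of_nonpos hr (neg_nonpos.2 hβ))

theorem mul_rpow_neg_eq_rpow_one_sub {β r : ℝ} (hr : 0 < r) : r * r ^ (-β) = r ^ (1 - β) := by
  rw [sub_eq_add_neg, rpow_add hr, rpow_one]

theorem setIntegral_Ioi_mul_min_one_rpow_neg {β : ℝ} (hβ : 0 ≤ β) {g : ℝ → ℝ}
    (hg : IntegrableOn (fun r => r * min 1 (r ^ (-β)) * g r) (Ioi 0)) :
    ∫ r in Ioi 0, r * min 1 (r ^ (-β)) * g r =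
      (∫ r in (0 : ℝ)..1, r * g r) + ∫ r in Ioi 1, r ^ (1 - β) * g r := by
  rw [← Ioc_union_Ioi_eq_Ioi zero_le_one] at hg ⊢
  rw [setIntegral_union Ioc_disjoint_Ioi_same measurableSet_Ioi
    (hg.mono_set subset_union_left) (hg.mono_set subset_union_right),
    intervalIntegral.integral_of_le zero_le_one]
  congr 1
  · refine setIntegral_congr_fun measurableSet_Ioc fun r hr => ?_
    rw [min_one_rpow_neg_of_le_one hβ hr.1 hr.2, mul_one]
  · refine setIntegral_congr_fun measurableSet_Ioi fun r (hr : 1 < r) => ?_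
    rw [min_one_rpow_neg_of_one_le hβ hr.le, mul_rpow_neg_eq_rpow_one_sub (one_pos.trans hr)]

theorem integrableOn_Ioi_mul_min_one_rpow_neg {β : ℝ} (hβ : 2 < β) :
    IntegrableOn (fun r => r * min 1 (r ^ (-β))) (Ioi (0 : ℝ)) := by
  rw [← Ioc_union_Ioi_eq_Ioi zero_le_one]
  refine IntegrableOn.union ?_ ?_
  · refine ((continuous_id.integrableOn_Icc (a := 0) (b := 1)).mono_set
      Ioc_subset_Icc_self).congr_fun (fun r hr => ?_) measurableSet_Ioc
    rw [id, min_one_rpow_neg_of_le_one (by linarith) hr.1 hr.2, mul_one]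
  · refine (integrableOn_Ioi_rpow_of_lt (by linarith : 1 - β < -1) one_pos).congr_fun
      (fun r (hr : 1 < r) => ?_) measurableSet_Ioi
    rw [min_one_rpow_neg_of_one_le (by linarith) hr.le,
      mul_rpow_neg_eq_rpow_one_sub (one_pos.trans hr)]

theorem integral_Ioi_mul_min_one_rpow_neg {β : ℝ} (hβ : 2 < β) :
    ∫ r in Ioi (0 : ℝ), r * min 1 (r ^ (-β)) = β / (2 * (β - 2)) := by
  have h := setIntegral_Ioi_mul_min_one_rpow_neg (g := fun _ => 1) (by linarith)
    (by simpa using integrableOn_Ioi_mul_min_one_rpow_neg hβ)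
  simp only [mul_one] at h
  rw [h, integral_id, integral_Ioi_rpow_of_lt (by linarith) one_pos, one_rpow,
    show 1 - β + 1 = -(β - 2) by ring]
  field_simp [show β - 2 ≠ 0 by linarith]
  ring

theorem integrableOn_polarCoord_target {E : Type*} [NormedAddCommGroup E] [NormedSpace ℝ E]
    {f : ℝ × ℝ → E} (hf : Integrable f) :
    IntegrableOn (fun p => p.1 • f (polarCoord.symm p)) polarCoord.target := by
  have h := integrableOn_image_iff_integrableOn_abs_det_fderiv_smul volume
    polarCoord.open_target.measurableSet
    (fun p _ => (hasFDerivAt_polarCoord_symm p).hasFDerivWithinAt) polarCoord.symm.injOn f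
  rw [polarCoord.symm_image_target_eq_source] at h
  refine (h.1 hf.integrableOn).congr_fun (fun p hp => ?_) polarCoord.open_target.measurableSet
  show |(fderivPolarCoordSymm p).det| • _ = _
  rw [det_fderivPolarCoordSymm, abs_of_pos hp.1]

theorem integral_eq_integral_Ioi_integral_polarCoord_symm {E : Type*} [NormedAddCommGroup E]
    [NormedSpace ℝ E] [CompleteSpace E] {f : ℝ × ℝ → E} (hf : Integrable f) :
    ∫ p, f p = ∫ r in Ioi 0, r • ∫ θ in -π..π, f (polarCoord.symm (r, θ)) := by
  have htarget : polarCoord.target = Ioi 0 ×ˢ Ioo (-π) π := rfl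
  have hint := integrableOn_polarCoord_target hf
  rw [htarget, IntegrableOn, Measure.volume_eq_prod, ← Measure.prod_restrict] at hint
  rw [← integral_comp_polarCoord_symm, htarget, Measure.volume_eq_prod, ← Measure.prod_restrict,
    integral_prod _ hint]
  refine setIntegral_congr_fun measurableSet_Ioi fun r _ => ?_
  rw [intervalIntegral.integral_of_le (by linarith [pi_pos]), integral_Ioc_eq_integral_Ioo,
    ← MeasureTheory.integral_smul]

def ptEquiv : ℝ × ℝ ≃ᵐ E2 :=
  MeasurableEquiv.finTwoArrow.symm.trans (MeasurableEquiv.toLp 2 (Fin 2 → ℝ))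

theorem measurePreserving_ptEquiv : MeasurePreserving ptEquiv :=
  (PiLp.volume_preserving_toLp (Fin 2)).comp (volume_preserving_finTwoArrow ℝ).symm

theorem norm_pt (a b : ℝ) : ‖pt a b‖ = √(a ^ 2 + b ^ 2) := by
  simp [pt, EuclideanSpace.norm_eq, Fin.sum_univ_two]

theorem pt_sub_pt (a b c d : ℝ) : pt a b - pt c d = pt (a - c) (b - d) := by
  ext i; fin_cases i <;> rfl

theorem norm_pt_polar {r : ℝ} (hr : 0 ≤ r) (θ : ℝ) : ‖pt (r * cos θ) (r * sin θ)‖ = r := by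
  rw [norm_pt, show (r * cos θ) ^ 2 + (r * sin θ) ^ 2 = r ^ 2 by
    linear_combination r ^ 2 * cos_sq_add_sin_sq θ, sqrt_sq hr]

theorem norm_pt_polar_sub_sq (r θ r₀ : ℝ) :
    ‖pt (r * cos θ) (r * sin θ) - pt r₀ 0‖ ^ 2 = r ^ 2 + r₀ ^ 2 - 2 * r * r₀ * cos θ := by
  rw [pt_sub_pt, norm_pt, sq_sqrt (by positivity)]
  linear_combination r ^ 2 * cos_sq_add_sin_sq θ

theorem integral_eq_integral_Ioi_integral_pt_polar {E : Type*} [NormedAddCommGroup E]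
    [NormedSpace ℝ E] [CompleteSpace E] {F : E2 → E} (hF : Integrable F) :
    ∫ x, F x = ∫ r in Ioi 0, r • ∫ θ in -π..π, F (pt (r * cos θ) (r * sin θ)) := by
  rw [← measurePreserving_ptEquiv.integral_comp' F]
  exact integral_eq_integral_Ioi_integral_polarCoord_symm
    ((measurePreserving_ptEquiv.integrable_comp_emb ptEquiv.measurableEmbedding).2 hF)

theorem integral_exp_neg_norm_pt_polar_sub_sq (r r₀ α : ℝ) :
    ∫ θ in -π..π, exp (-(2 * ‖pt (r * cos θ) (r * sin θ) - pt r₀ 0‖ ^ 2 / α ^ 2)) =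
      2 * π * exp (-(2 * (r ^ 2 + r₀ ^ 2) / α ^ 2)) * besselI0 (4 * r * r₀ / α ^ 2) := by
  have hsplit : ∀ θ, exp (-(2 * ‖pt (r * cos θ) (r * sin θ) - pt r₀ 0‖ ^ 2 / α ^ 2)) =
      exp (-(2 * (r ^ 2 + r₀ ^ 2) / α ^ 2)) * exp (4 * r * r₀ / α ^ 2 * cos θ) := fun θ => by
    rw [norm_pt_polar_sub_sq, ← exp_add]
    ring_nf
  simp_rw [hsplit]
  rw [intervalIntegral.integral_const_mul, integral_exp_mul_cos_neg_pi_pi]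
  ring

theorem integrable_min_one_rpow_neg_norm {β : ℝ} (hβ : 2 < β) :
    Integrable fun x : E2 => min 1 (‖x‖ ^ (-β)) := by
  refine (integrable_fun_norm_addHaar volume (f := fun r => min 1 (r ^ (-β)))).2 ?_
  simpa [finrank_euclideanSpace_fin] using integrableOn_Ioi_mul_min_one_rpow_neg hβ

theorem integral_min_one_rpow_neg_norm {β : ℝ} (hβ : 2 < β) :
    ∫ x : E2, min 1 (‖x‖ ^ (-β)) = π * β / (β - 2) := by
  rw [integral_fun_norm_addHaar volume (fun r => min 1 (r ^ (-β)))]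
  norm_num [finrank_euclideanSpace_fin, Measure.real, pi_pos.le]
  rw [integral_Ioi_mul_min_one_rpow_neg hβ]
  field_simp [show β - 2 ≠ 0 by linarith]

theorem integrable_exp_neg_norm_sub_sq_mul_min_one_rpow_neg {β : ℝ} (hβ : 2 < β) (α r₀ : ℝ) :
    Integrable fun x : E2 => exp (-(2 * ‖x - pt r₀ 0‖ ^ 2 / α ^ 2)) * min 1 (‖x‖ ^ (-β)) := by
  refine (integrable_min_one_rpow_neg_norm hβ).bdd_mul (c := 1) (by fun_prop)
    (.of_forall fun x => ?_)
  rw [norm_of_nonneg (exp_pos _).le, exp_le_one_iff, neg_nonpos]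
  positivity

theorem integral_exp_neg_norm_sub_sq_mul_min_one_rpow_neg {β : ℝ} (hβ : 2 < β) (α r₀ : ℝ) :
    ∫ x : E2, exp (-(2 * ‖x - pt r₀ 0‖ ^ 2 / α ^ 2)) * min 1 (‖x‖ ^ (-β)) =
      2 * π * exp (-(2 * r₀ ^ 2 / α ^ 2)) *
        ((∫ r in (0 : ℝ)..1, exp (-(2 * r ^ 2 / α ^ 2)) * besselI0 (4 * r * r₀ / α ^ 2) * r) +
          ∫ r in Ioi 1,
            exp (-(2 * r ^ 2 / α ^ 2)) * r ^ (1 - β) * besselI0 (4 * r * r₀ / α ^ 2)) := by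
  set g : ℝ → ℝ := fun r => exp (-(2 * r ^ 2 / α ^ 2)) * besselI0 (4 * r * r₀ / α ^ 2)
  have hg_int : IntegrableOn (fun r => r * min 1 (r ^ (-β)) * g r) (Ioi 0) := by
    refine (integrableOn_Ioi_mul_min_one_rpow_neg hβ).mul_bdd (c := exp (2 * r₀ ^ 2 / α ^ 2))
      (by fun_prop) (.of_forall fun r => ?_)
    rw [norm_of_nonneg (mul_nonneg (exp_pos _).le (besselI0_nonneg _))]
    exact exp_neg_mul_besselI0_le r r₀ α
  have hradial : ∀ r ∈ Ioi (0 : ℝ), r • ∫ θ in -π..π,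
      exp (-(2 * ‖pt (r * cos θ) (r * sin θ) - pt r₀ 0‖ ^ 2 / α ^ 2)) *
        min 1 (‖pt (r * cos θ) (r * sin θ)‖ ^ (-β)) =
      2 * π * exp (-(2 * r₀ ^ 2 / α ^ 2)) * (r * min 1 (r ^ (-β)) * g r) := fun r hr => by
    simp_rw [norm_pt_polar (mem_Ioi.1 hr).le]
    rw [intervalIntegral.integral_mul_const, integral_exp_neg_norm_pt_polar_sub_sq, smul_eq_mul]
    simp only [g]
    rw [show -(2 * (r ^ 2 + r₀ ^ 2) / α ^ 2) = -(2 * r₀ ^ 2 / α ^ 2) + -(2 * r ^ 2 / α ^ 2) by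
      ring, exp_add]
    ring
  rw [integral_eq_integral_Ioi_integral_pt_polar
      (integrable_exp_neg_norm_sub_sq_mul_min_one_rpow_neg hβ α r₀),
    setIntegral_congr_fun measurableSet_Ioi hradial, MeasureTheory.integral_const_mul,
    setIntegral_Ioi_mul_min_one_rpow_neg (by linarith) hg_int]
  congr 2 <;> congr 1 <;> ext r <;> ring

theorem stmt_8_general (lam α β P r₀ : ℝ)
    (hβ : 2 < β) :
    (∫ x : E2,
        P * (lam * (1 - Real.exp (-(2 * ‖x - pt r₀ 0‖ ^ 2 / α ^ 2)))) *
          min 1 (‖x‖ ^ (-β))) =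
      P * Real.pi * lam * β / (β - 2) -
        2 * P * Real.pi * lam * Real.exp (-(2 * r₀ ^ 2 / α ^ 2)) *
          ((∫ r in (0 : ℝ)..1,
              Real.exp (-(2 * r ^ 2 / α ^ 2)) * besselI0 (4 * r * r₀ / α ^ 2) * r) +
            ∫ r in Set.Ioi (1 : ℝ),
              Real.exp (-(2 * r ^ 2 / α ^ 2)) * r ^ (1 - β) *
                besselI0 (4 * r * r₀ / α ^ 2)) := by
  calc (∫ x : E2, P * (lam * (1 - exp (-(2 * ‖x - pt r₀ 0‖ ^ 2 / α ^ 2)))) * min 1 (‖x‖ ^ (-β)))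
      = P * lam * ((∫ x : E2, min 1 (‖x‖ ^ (-β))) -
          ∫ x : E2, exp (-(2 * ‖x - pt r₀ 0‖ ^ 2 / α ^ 2)) * min 1 (‖x‖ ^ (-β))) := by
        rw [← integral_sub (integrable_min_one_rpow_neg_norm hβ)
          (integrable_exp_neg_norm_sub_sq_mul_min_one_rpow_neg hβ α r₀),
          ← MeasureTheory.integral_const_mul]
        congr 1 with x
        ring
    _ = _ := by
        rw [integral_min_one_rpow_neg_norm hβ,
          integral_exp_neg_norm_sub_sq_mul_min_one_rpow_neg hβ α r₀]
        ring

/-- Mean interference for the Gauss DPP with a fixed serving base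
station at `x₀ = (r₀, 0)` and path loss `l(x) = min(1, ‖x‖^{-β})`:
`P ∫ λ(1 − e^{−2‖x−x₀‖²/α²}) min(1,‖x‖^{−β}) dx
  = Pπλβ/(β−2) − 2Pπλ e^{−2r₀²/α²}(A₁(r₀)+A₂(r₀))`. -/
theorem stmt_8 (lam α β P r₀ : ℝ)
    (hlam : 0 < lam) (hα : 0 < α) (hβ : 2 < β) (hP : 0 < P) (hr₀ : 0 ≤ r₀) :
    (∫ x : E2,
        P * (lam * (1 - Real.exp (-(2 * ‖x - pt r₀ 0‖ ^ 2 / α ^ 2)))) *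
          min 1 (‖x‖ ^ (-β))) =
      P * Real.pi * lam * β / (β - 2) -
        2 * P * Real.pi * lam * Real.exp (-(2 * r₀ ^ 2 / α ^ 2)) *
          ((∫ r in (0 : ℝ)..1,
              Real.exp (-(2 * r ^ 2 / α ^ 2)) * besselI0 (4 * r * r₀ / α ^ 2) * r) +
            ∫ r in Set.Ioi (1 : ℝ),
              Real.exp (-(2 * r ^ 2 / α ^ 2)) * r ^ (1 - β) *
                besselI0 (4 * r * r₀ / α ^ 2)) :=
  stmt_8_general lam α β P r₀ hβ
end
end

section
/- Fix λ > 0, α > 0 and ν > 0, and let φ(x) = λ·(να²/(2πΓ(2/ν)))·exp(−‖αx‖^ν) on ℝ² be the spectral density of the Generalized Gamma determinantal point process, where Γ denotes the Euler Gamma function. Then the repulsiveness measure μ = (1/λ) ∫_{ℝ²} |φ(x)|² dx equals λνα²/(2^{1+2/ν} π Γ(2/ν)). -/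
/-!
Squaring the spectral density only rescales space: `exp (-‖α • x‖ ^ ν) ^ 2 = exp (-‖R • x‖ ^ ν)`
with `R = 2 ^ (1/ν) α`. For any Haar measure on a `d`-dimensional space,
`∫ exp (-‖x‖ ^ p) = vol (ball 0 1) · Γ (d/p + 1)` (integration in polar coordinates), so
`∫ |φ|² = φ(0)² R⁻² π Γ (2/ν + 1)`, and `Γ (2/ν + 1) = (2/ν) Γ (2/ν)` gives the closed form.
-/

open MeasureTheory
open scoped Real

noncomputable section

open Module Real

section

variable {E : Type*} [NormedAddCommGroup E] [NormedSpace ℝ E] [FiniteDimensional ℝ E]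
  [MeasurableSpace E] [BorelSpace E] (μ : Measure E) [μ.IsAddHaarMeasure]

theorem integral_exp_neg_norm_rpow {p : ℝ} (hp : 0 < p) :
    ∫ x, exp (-‖x‖ ^ p) ∂μ = μ.real (Metric.ball 0 1) * Gamma (finrank ℝ E / p + 1) := by
  have hΓ : 0 < Gamma (finrank ℝ E / p + 1) := Gamma_pos_of_pos (by positivity)
  rw [measureReal_def, measure_unitBall_eq_integral_div_gamma μ hp,
    ENNReal.toReal_ofReal (div_nonneg (integral_nonneg fun _ ↦ (exp_pos _).le) hΓ.le),
    div_mul_cancel₀ _ hΓ.ne']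

theorem integral_exp_neg_norm_smul_rpow {p : ℝ} (hp : 0 < p) (R : ℝ) :
    ∫ x, exp (-‖R • x‖ ^ p) ∂μ =
      |(R ^ finrank ℝ E)⁻¹| * μ.real (Metric.ball 0 1) * Gamma (finrank ℝ E / p + 1) := by
  rw [Measure.integral_comp_smul μ (fun x ↦ exp (-‖x‖ ^ p)), integral_exp_neg_norm_rpow μ hp,
    smul_eq_mul, mul_assoc]

end

theorem volume_real_ball_fin_two (x : E2) : volume.real (Metric.ball x 1) = π := by
  simp [measureReal_def, pi_pos.le]

/-- The repulsiveness measure of the Generalized Gamma DPP with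
spectral density `φ(x) = λ (να²/(2πΓ(2/ν))) e^{−‖αx‖^ν}`:
`μ = (1/λ) ∫_{ℝ²} |φ(x)|² dx = λνα²/(2^{1+2/ν} π Γ(2/ν))`. -/
theorem stmt_18 (lam α ν : ℝ) (hlam : 0 < lam) (hα : 0 < α) (hν : 0 < ν) :
    (1 / lam) *
        ∫ x : E2,
          |lam * (ν * α ^ 2 / (2 * Real.pi * Real.Gamma (2 / ν))) *
              Real.exp (-‖α • x‖ ^ ν)| ^ 2 =
      lam * ν * α ^ 2 /
        (2 ^ ((1 : ℝ) + 2 / ν) * Real.pi * Real.Gamma (2 / ν)) := by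
  set c := lam * (ν * α ^ 2 / (2 * π * Gamma (2 / ν))) with hc
  have hsq (x : E2) : |c * exp (-‖α • x‖ ^ ν)| ^ 2 = c ^ 2 * exp (-‖(2 ^ ν⁻¹ * α) • x‖ ^ ν) := by
    rw [mul_smul, norm_smul _ (α • x), norm_of_nonneg (by positivity : (0 : ℝ) ≤ 2 ^ ν⁻¹),
      mul_rpow (by positivity) (norm_nonneg _), rpow_inv_rpow zero_le_two hν.ne', sq_abs,
      mul_pow, ← exp_nat_mul]
    ring_nf
  have hscale : ((2 : ℝ) ^ ν⁻¹ * α) ^ 2 = 2 ^ (2 / ν) * α ^ 2 := by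
    rw [mul_pow, ← rpow_natCast, ← rpow_mul zero_le_two]
    ring_nf
  have hΓ : Gamma (2 / ν + 1) = 2 / ν * Gamma (2 / ν) := Gamma_add_one (by positivity)
  have hpow : (2 : ℝ) ^ ((1 : ℝ) + 2 / ν) = 2 * 2 ^ (2 / ν) := by
    rw [rpow_add zero_lt_two, rpow_one]
  simp only [hsq]
  rw [integral_const_mul, integral_exp_neg_norm_smul_rpow _ hν, finrank_euclideanSpace_fin,
    volume_real_ball_fin_two, Nat.cast_ofNat, hscale, hΓ, hpow,
    abs_of_pos (by positivity)]
  have : 0 < Gamma (2 / ν) := Gamma_pos_of_pos (by positivity)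
  rw [hc]
  field_simp
end
end
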